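/- arXiv:1907.04562 — 3 statements merged into one kernel-verified Lean document; each statement's English description precedes it below -/
import Mathlib

section
/- An irreducible 2-step nilpotent metric Lie algebra admits at most one bi-invariant orthogonal complex structure up to sign: if I and J are both bi-invariant orthogonal complex structures then I = J or I = −J. -/
/-!
`S = I ∘ J + J ∘ I` is symmetric and commutes with the bracket, so for an eigenvalue `μ` the
kernel and range of `S - μ` are complementary orthogonal ideals; irreducibility forces
`S = μ • id`. On a nonzero bracket `c`, `I ∘ J` squares to the identity while `J ∘ I` is its
inverse, so `μ • (I ∘ J) c = 2 • c` and `|μ| = 2`. The isometry `T = I ∘ J` then satisfies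
`⟪T v, v⟫ = (μ / 2) ‖v‖²`, the equality case of Cauchy–Schwarz, so `T = ±id`, i.e. `I = ∓J`.
-/

open scoped RealInnerProductSpace

section Bracket

variable {R M : Type*} [CommRing R] [AddCommGroup M] [Module R M] {l : M →ₗ[R] M →ₗ[R] M}
  {A : M →ₗ[R] M}

theorem map_bracket_eq_bracket_map_right (hl : l.IsAlt) (hA : ∀ x y, A (l x y) = l (A x) y)
    (x y : M) : A (l x y) = l x (A y) := by
  rw [← hl.neg y x, map_neg, hA, hl.neg]

theorem bracket_mem_ker (hA : ∀ x y, A (l x y) = l (A x) y) {x : M} (hx : x ∈ LinearMap.ker A)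
    (y : M) : l x y ∈ LinearMap.ker A := by
  rw [LinearMap.mem_ker] at hx ⊢
  rw [hA, hx, map_zero, LinearMap.zero_apply]

theorem bracket_mem_range (hA : ∀ x y, A (l x y) = l (A x) y) {x : M}
    (hx : x ∈ LinearMap.range A) (y : M) : l x y ∈ LinearMap.range A := by
  obtain ⟨w, rfl⟩ := hx
  exact ⟨l w y, hA w y⟩

/-- `I ∘ J` maps `l x y` to `l (I x) (J y)`, so its square maps it to `l (I² x) (J² y)`. -/
theorem comp_comp_bracket {I J : M →ₗ[R] M} (hl : l.IsAlt)
    (hI2 : I ∘ₗ I = -LinearMap.id) (hIl : ∀ x y, I (l x y) = l (I x) y)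
    (hJ2 : J ∘ₗ J = -LinearMap.id) (hJl : ∀ x y, J (l x y) = l (J x) y) (x y : M) :
    I (J (I (J (l x y)))) = l x y := by
  have hIJ : ∀ x y, I (J (l x y)) = l (I x) (J y) := fun x y => by
    rw [map_bracket_eq_bracket_map_right hl hJl, hIl]
  rw [hIJ, hIJ, ← LinearMap.comp_apply I I, ← LinearMap.comp_apply J J, hI2, hJ2]
  simp

theorem eq_or_eq_neg_of_comp_eq_smul_id [NoZeroDivisors R] {I J : M →ₗ[R] M} {ε : R}
    (hJ2 : J ∘ₗ J = -LinearMap.id) (hIJ : I ∘ₗ J = ε • LinearMap.id) (hε : ε ^ 2 = 1) :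
    I = J ∨ I = -J := by
  have hI : I = -ε • J := by
    calc I = -((I ∘ₗ J) ∘ₗ J) := by rw [LinearMap.comp_assoc, hJ2]; simp
      _ = -ε • J := by rw [hIJ]; ext; simp
  rcases sq_eq_one_iff.1 hε with rfl | rfl
  · right; simpa using hI
  · left; simpa using hI

end Bracket

section InnerProduct

variable {n : Type*} [NormedAddCommGroup n] [InnerProductSpace ℝ n]

theorem inner_map_left_eq_neg_of_comp_self {I : n →ₗ[ℝ] n} (hI2 : I ∘ₗ I = -LinearMap.id)
    (hIorth : ∀ a b : n, ⟪I a, I b⟫ = ⟪a, b⟫) (a b : n) : ⟪I a, b⟫ = -⟪a, I b⟫ := by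
  have h := hIorth a (I b)
  rw [← LinearMap.comp_apply I I, hI2] at h
  simp only [LinearMap.neg_apply, LinearMap.id_apply, inner_neg_right] at h
  linarith

theorem isSymmetric_comp_add_comp {I J : n →ₗ[ℝ] n}
    (hI : ∀ a b : n, ⟪I a, b⟫ = -⟪a, I b⟫) (hJ : ∀ a b : n, ⟪J a, b⟫ = -⟪a, J b⟫) :
    (I ∘ₗ J + J ∘ₗ I).IsSymmetric := by
  intro a b
  simp only [LinearMap.add_apply, LinearMap.comp_apply, inner_add_left, inner_add_right, hI, hJ]
  ring

theorem eq_smul_of_inner_self_eq {u v : n} {ε : ℝ} (hnorm : ⟪u, u⟫ = ⟪v, v⟫)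
    (hinner : ⟪u, v⟫ = ε * ⟪v, v⟫) (hε : ε ^ 2 = 1) : u = ε • v := by
  rw [← sub_eq_zero, ← inner_self_eq_zero (𝕜 := ℝ)]
  simp only [inner_sub_left, inner_sub_right, real_inner_smul_left, real_inner_smul_right,
    real_inner_comm u v, hnorm, hinner]
  linear_combination (-⟪v, v⟫) * hε

theorem inner_comp_apply_self_of_comp_add_comp_eq {I J : n →ₗ[ℝ] n}
    (hI : ∀ a b : n, ⟪I a, b⟫ = -⟪a, I b⟫) (hJ : ∀ a b : n, ⟪J a, b⟫ = -⟪a, J b⟫) {μ : ℝ}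
    (hμ : I ∘ₗ J + J ∘ₗ I = μ • LinearMap.id) (v : n) : ⟪I (J v), v⟫ = μ / 2 * ⟪v, v⟫ := by
  have h : ⟪(I ∘ₗ J + J ∘ₗ I) v, v⟫ = ⟪(μ • LinearMap.id : n →ₗ[ℝ] n) v, v⟫ := by rw [hμ]
  simp only [LinearMap.add_apply, LinearMap.comp_apply, LinearMap.smul_apply, LinearMap.id_apply,
    inner_add_left, real_inner_smul_left, hJ (I v) v, hI v (J v), neg_neg,
    real_inner_comm (I (J v)) v] at h
  linarith

theorem sq_eq_sq_of_smul_eq_smul {u v : n} {a b : ℝ} (huv : ⟪u, u⟫ = ⟪v, v⟫) (hv : v ≠ 0)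
    (h : a • u = b • v) : a ^ 2 = b ^ 2 := by
  have h' := congrArg (fun w => ⟪w, w⟫) h
  simp only [real_inner_smul_left, real_inner_smul_right, huv] at h'
  exact mul_right_cancel₀ (inner_self_ne_zero.2 hv) (by linear_combination h')

def IsOrthIrreducible (l : n →ₗ[ℝ] n →ₗ[ℝ] n) : Prop :=
  ∀ N' N'' : Submodule ℝ n,
    (∀ x ∈ N', ∀ y : n, l x y ∈ N') → (∀ x ∈ N'', ∀ y : n, l x y ∈ N'') →
    (∀ x ∈ N', ∀ y ∈ N'', ⟪x, y⟫ = 0) → N' ⊔ N'' = ⊤ → N' = ⊥ ∨ N'' = ⊥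

variable [FiniteDimensional ℝ n] {l : n →ₗ[ℝ] n →ₗ[ℝ] n} {A : n →ₗ[ℝ] n}

/-- Kernel and range of `A` are orthogonal complementary ideals. -/
theorem IsOrthIrreducible.ker_eq_bot_or_eq_zero (hirr : IsOrthIrreducible l)
    (hA : A.IsSymmetric) (hAl : ∀ x y, A (l x y) = l (A x) y) : LinearMap.ker A = ⊥ ∨ A = 0 := by
  have hker := hA.orthogonal_range
  refine (hirr _ _ (fun x hx => bracket_mem_ker hAl hx) (fun x hx => bracket_mem_range hAl hx)
    (fun x hx y hy => ?_) ?_).imp_right LinearMap.range_eq_bot.1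
  · rw [← hker] at hx
    exact (Submodule.mem_orthogonal' _ _).1 hx y hy
  · rw [← hker, sup_comm, Submodule.sup_orthogonal_of_hasOrthogonalProjection]

theorem IsOrthIrreducible.exists_eq_smul_id [Nontrivial n] (hirr : IsOrthIrreducible l)
    (hA : A.IsSymmetric) (hAl : ∀ x y, A (l x y) = l (A x) y) :
    ∃ μ : ℝ, A = μ • LinearMap.id := by
  obtain ⟨μ, hμ⟩ : ∃ μ, Module.End.HasEigenvalue A μ :=
    ⟨_, hA.hasEigenvalue_iSup_of_finiteDimensional⟩
  have hμ_symm : (μ • LinearMap.id : n →ₗ[ℝ] n).IsSymmetric := fun x y => by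
    simp [real_inner_smul_left, real_inner_smul_right]
  refine ⟨μ, sub_eq_zero.1 ((hirr.ker_eq_bot_or_eq_zero (hA.sub hμ_symm) ?_).resolve_left ?_)⟩
  · intro x y
    simp [hAl]
  · rwa [Module.End.hasEigenvalue_iff, Module.End.eigenspace_def] at hμ

end InnerProduct

theorem killing_stmt9_general {n : Type*} [NormedAddCommGroup n] [InnerProductSpace ℝ n]
    [FiniteDimensional ℝ n]
    (l : n →ₗ[ℝ] n →ₗ[ℝ] n) (hanti : ∀ x : n, l x x = 0)
    (hna : ∃ x : n, ∃ y : n, l x y ≠ 0)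
    (hirr : ∀ N' N'' : Submodule ℝ n,
      (∀ x ∈ N', ∀ y : n, l x y ∈ N') → (∀ x ∈ N'', ∀ y : n, l x y ∈ N'') →
      (∀ x ∈ N', ∀ y ∈ N'', ⟪x, y⟫ = 0) → N' ⊔ N'' = ⊤ → N' = ⊥ ∨ N'' = ⊥)
    (I J : n →ₗ[ℝ] n)
    (hI2 : I ∘ₗ I = -LinearMap.id) (hIbi : ∀ x y : n, I (l x y) = l (I x) y)
    (hIorth : ∀ a b : n, ⟪I a, I b⟫ = ⟪a, b⟫)
    (hJ2 : J ∘ₗ J = -LinearMap.id) (hJbi : ∀ x y : n, J (l x y) = l (J x) y)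
    (hJorth : ∀ a b : n, ⟪J a, J b⟫ = ⟪a, b⟫) :
    I = J ∨ I = -J := by
  obtain ⟨x₀, y₀, hc⟩ := hna
  have : Nontrivial n := ⟨⟨l x₀ y₀, 0, hc⟩⟩
  have hIskew := inner_map_left_eq_neg_of_comp_self hI2 hIorth
  have hJskew := inner_map_left_eq_neg_of_comp_self hJ2 hJorth
  obtain ⟨μ, hμ⟩ := IsOrthIrreducible.exists_eq_smul_id hirr
    (isSymmetric_comp_add_comp hIskew hJskew) (fun x y => by simp [hIbi, hJbi])
  have hIJ_inner (v : n) : ⟪I (J v), I (J v)⟫ = ⟪v, v⟫ := by rw [hIorth, hJorth]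
  have hμc : μ • I (J (l x₀ y₀)) = (2 : ℝ) • l x₀ y₀ := by
    have hJIIJ (v : n) : J (I (I (J v))) = v := by
      simp [← LinearMap.comp_apply I I, ← LinearMap.comp_apply J J, hI2, hJ2]
    have h := LinearMap.congr_fun hμ (I (J (l x₀ y₀)))
    simp only [LinearMap.add_apply, LinearMap.comp_apply, LinearMap.smul_apply,
      LinearMap.id_apply, comp_comp_bracket hanti hI2 hIbi hJ2 hJbi, hJIIJ] at h
    rw [← h, two_smul]
  have hε : (μ / 2) ^ 2 = 1 := by
    have h := sq_eq_sq_of_smul_eq_smul (hIJ_inner _) hc hμc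
    field_simp
    linarith
  have hIJ : I ∘ₗ J = (μ / 2) • LinearMap.id := LinearMap.ext fun v =>
    eq_smul_of_inner_self_eq (hIJ_inner v)
      (inner_comp_apply_self_of_comp_add_comp_eq hIskew hJskew hμ v) hε
  exact eq_or_eq_neg_of_comp_eq_smul_id hJ2 hIJ hε

/-- An irreducible 2-step nilpotent metric Lie algebra admits at most one
bi-invariant orthogonal complex structure up to sign: if `I` and `J` are both bi-invariant
orthogonal complex structures, then `I = J` or `I = −J`. -/
theorem killing_stmt9 {n : Type*} [NormedAddCommGroup n] [InnerProductSpace ℝ n]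
    [FiniteDimensional ℝ n]
    (l : n →ₗ[ℝ] n →ₗ[ℝ] n) (hanti : ∀ x : n, l x x = 0)
    (Z : Submodule ℝ n) (hZ : ∀ x : n, x ∈ Z ↔ ∀ y : n, l x y = 0)
    (h2 : ∀ x y : n, l x y ∈ Z) (hna : ∃ x : n, ∃ y : n, l x y ≠ 0)
    (j : n → n →ₗ[ℝ] n) (hj : ∀ z x y : n, ⟪j z x, y⟫ = ⟪z, l x y⟫)
    (hjinj : ∀ z ∈ Z, j z = 0 → z = 0)
    (hirr : ∀ N' N'' : Submodule ℝ n,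
      (∀ x ∈ N', ∀ y : n, l x y ∈ N') → (∀ x ∈ N'', ∀ y : n, l x y ∈ N'') →
      (∀ x ∈ N', ∀ y ∈ N'', ⟪x, y⟫ = 0) → N' ⊔ N'' = ⊤ → N' = ⊥ ∨ N'' = ⊥)
    (I J : n →ₗ[ℝ] n)
    (hI2 : I ∘ₗ I = -LinearMap.id) (hIbi : ∀ x y : n, I (l x y) = l (I x) y)
    (hIorth : ∀ a b : n, ⟪I a, I b⟫ = ⟪a, b⟫)
    (hJ2 : J ∘ₗ J = -LinearMap.id) (hJbi : ∀ x y : n, J (l x y) = l (J x) y)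
    (hJorth : ∀ a b : n, ⟪J a, J b⟫ = ⟪a, b⟫) :
    I = J ∨ I = -J :=
  killing_stmt9_general l hanti hna hirr I J hI2 hIbi hIorth hJ2 hJbi hJorth
end

section
/- The Killing 2-form associated to a bi-invariant orthogonal complex structure on an irreducible 2-step nilpotent metric Lie algebra is never parallel: ∇_z α = −j(z)J|_v (as a 2-form on v) cannot vanish for all z ∈ z. -/
open scoped RealInnerProductSpace

/-!
Write `T = j z` for a central `z`. Since `⟪j z x, y⟫ = ⟪z, [x, y]⟫`, the map `T` kills the centre
`𝔷` and takes values in `𝔳 = 𝔷ᗮ`, and bi-invariance together with skew-adjointness of `J` makes `T`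
anticommute with `J`. Hence on `𝔳` the commutator `[T, α]` is `T J - J T = 2 T J`, while on `𝔷`
both sides vanish, so `∇_z α = -(1/2)[T, α] = -T J`. If `T J = 0` for all central `z`, then,
`J` being invertible, `j z = 0` for all `z`, so every bracket `[x, y]` (a central element) is
zero, contradicting non-abelianness.
-/

namespace LinearMap

variable {R M N : Type*} [CommRing R] [AddCommGroup M] [Module R M] [AddCommGroup N] [Module R N]

theorem eq_zero_of_comp_eq_zero_of_comp_self_eq_neg_id {T : M →ₗ[R] N} {J : M →ₗ[R] M}
    (hJ2 : J ∘ₗ J = -LinearMap.id) (h : T ∘ₗ J = 0) : T = 0 :=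
  calc T = -((T ∘ₗ J) ∘ₗ J) := by rw [comp_assoc, hJ2, comp_neg, comp_id, neg_neg]
    _ = 0 := by rw [h, zero_comp, neg_zero]

end LinearMap

section InnerProductSpace

variable {E : Type*} [NormedAddCommGroup E] [InnerProductSpace ℝ E]

theorem inner_map_left_eq_neg_inner_map_right {J : E →ₗ[ℝ] E} (hJ2 : J ∘ₗ J = -LinearMap.id)
    (hJorth : ∀ a b : E, ⟪J a, J b⟫ = ⟪a, b⟫) (a b : E) : ⟪J a, b⟫ = -⟪a, J b⟫ := by
  have hJJ : J (J b) = -b := by simpa using LinearMap.congr_fun hJ2 b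
  rw [← hJorth a (J b), hJJ, inner_neg_right, neg_neg]

/-- Here `Z` is the centre and `A` the Killing form `α₂ + α₀`. -/
theorem comp_sub_comp_eq_two_smul_comp (Z : Submodule ℝ E) [Z.HasOrthogonalProjection]
    {T J A : E →ₗ[ℝ] E} (hTZ : ∀ w ∈ Z, T w = 0) (hT : ∀ x, T x ∈ Zᗮ)
    (hJZ : ∀ w ∈ Z, J w ∈ Z) (hAZ : ∀ w ∈ Z, A w ∈ Z) (hAV : ∀ v ∈ Zᗮ, A v = J v)
    (hJT : ∀ x, J (T x) = -T (J x)) :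
    T ∘ₗ A - A ∘ₗ T = (2 : ℝ) • (T ∘ₗ J) := by
  ext x
  obtain ⟨w, hw, v, hv, rfl⟩ := Z.exists_add_mem_mem_orthogonal x
  have hTw : T w = 0 := hTZ w hw
  have hTAw : T (A w) = 0 := hTZ _ (hAZ w hw)
  have hTJw : T (J w) = 0 := hTZ _ (hJZ w hw)
  have hAT : ∀ y, A (T y) = -T (J y) := fun y => by rw [hAV _ (hT y), hJT]
  simp only [LinearMap.sub_apply, LinearMap.comp_apply, LinearMap.smul_apply, hAT, map_add, hTw,
    hTAw, hTJw, hAV v hv, map_zero]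
  module

namespace TwoStepNilpotent

variable {l : E →ₗ[ℝ] E →ₗ[ℝ] E} {j : E → E →ₗ[ℝ] E}

theorem j_apply_eq_zero (hj : ∀ z x y : E, ⟪j z x, y⟫ = ⟪z, l x y⟫) {w : E}
    (hw : ∀ y, l w y = 0) (z : E) : j z w = 0 :=
  ext_inner_right ℝ fun y => by rw [hj, hw, inner_zero_left, inner_zero_right]

theorem j_apply_mem_orthogonal (hl : l.IsAlt) (hj : ∀ z x y : E, ⟪j z x, y⟫ = ⟪z, l x y⟫)
    {Z : Submodule ℝ E} (hZ : ∀ w ∈ Z, ∀ y, l w y = 0) (z x : E) : j z x ∈ Zᗮ := by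
  rw [Submodule.mem_orthogonal]
  intro w hw
  rw [real_inner_comm, hj, ← hl.neg, hZ w hw, neg_zero, inner_zero_right]

theorem bracket_map_right (hl : l.IsAlt) {J : E →ₗ[ℝ] E} (hJbi : ∀ x y : E, J (l x y) = l (J x) y)
    (x y : E) : l x (J y) = J (l x y) := by
  rw [← hl.neg, ← hJbi, ← map_neg, hl.neg]

theorem map_j_apply (hl : l.IsAlt) (hj : ∀ z x y : E, ⟪j z x, y⟫ = ⟪z, l x y⟫)
    {J : E →ₗ[ℝ] E} (hJ2 : J ∘ₗ J = -LinearMap.id) (hJbi : ∀ x y : E, J (l x y) = l (J x) y)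
    (hJorth : ∀ a b : E, ⟪J a, J b⟫ = ⟪a, b⟫) (z x : E) : J (j z x) = -j z (J x) :=
  ext_inner_right ℝ fun y => by
    rw [inner_map_left_eq_neg_inner_map_right hJ2 hJorth, hj, bracket_map_right hl hJbi,
      inner_neg_left, hj, hJbi]

end TwoStepNilpotent

end InnerProductSpace

theorem killing_stmt10_general {n : Type*} [NormedAddCommGroup n] [InnerProductSpace ℝ n]
    [FiniteDimensional ℝ n]
    (l : n →ₗ[ℝ] n →ₗ[ℝ] n) (hanti : ∀ x : n, l x x = 0)
    (Z : Submodule ℝ n) (hZ : ∀ x : n, x ∈ Z ↔ ∀ y : n, l x y = 0)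
    (h2 : ∀ x y : n, l x y ∈ Z) (hna : ∃ x : n, ∃ y : n, l x y ≠ 0)
    (j : n → n →ₗ[ℝ] n) (hj : ∀ z x y : n, ⟪j z x, y⟫ = ⟪z, l x y⟫)
    (hjinj : ∀ z ∈ Z, j z = 0 → z = 0)
    -- J is a bi-invariant orthogonal complex structure
    (J : n →ₗ[ℝ] n) (hJ2 : J ∘ₗ J = -LinearMap.id)
    (hJbi : ∀ x y : n, J (l x y) = l (J x) y)
    (hJorth : ∀ a b : n, ⟪J a, J b⟫ = ⟪a, b⟫)
    -- the associated Killing 2-form α = α₂ + α₀ with α₂ = J|_v and α₀ = 3 J|_z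
    (A2 A0 : n →ₗ[ℝ] n)
    (hA2Z : ∀ z ∈ Z, A2 z = 0) (hA2V : ∀ x ∈ Zᗮ, A2 x = J x)
    (hA0V : ∀ x ∈ Zᗮ, A0 x = 0) (hA0Z : ∀ z ∈ Z, A0 z = (3 : ℝ) • J z) :
    -- ∇_z α = −(1/2)[j(z), α] equals −j(z) ∘ J, and it cannot vanish for all z ∈ Z
    (∀ z ∈ Z, (-(1 / 2 : ℝ)) • ((j z) ∘ₗ (A2 + A0) - (A2 + A0) ∘ₗ (j z))
        = -((j z) ∘ₗ J)) ∧
    ¬(∀ z ∈ Z, (j z) ∘ₗ J = 0) := by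
  have hl : l.IsAlt := hanti
  have hcentral : ∀ w ∈ Z, ∀ y, l w y = 0 := fun w hw => (hZ w).mp hw
  have hJZ : ∀ w ∈ Z, J w ∈ Z := fun w hw =>
    (hZ _).mpr fun y => by rw [← hJbi, hcentral w hw, map_zero]
  refine ⟨fun z _ => ?_, fun h => ?_⟩
  · have hAZ : ∀ w ∈ Z, (A2 + A0) w ∈ Z := fun w hw => by
      simpa [hA2Z w hw, hA0Z w hw] using Z.smul_mem 3 (hJZ w hw)
    have hAV : ∀ v ∈ Zᗮ, (A2 + A0) v = J v := fun v hv => by simp [hA2V v hv, hA0V v hv]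
    rw [comp_sub_comp_eq_two_smul_comp Z
      (fun w hw => TwoStepNilpotent.j_apply_eq_zero hj (hcentral w hw) z)
      (TwoStepNilpotent.j_apply_mem_orthogonal hl hj hcentral z) hJZ hAZ hAV
      (TwoStepNilpotent.map_j_apply hl hj hJ2 hJbi hJorth z)]
    module
  · obtain ⟨x, y, hxy⟩ := hna
    exact hxy <| hjinj _ (h2 x y) <|
      LinearMap.eq_zero_of_comp_eq_zero_of_comp_self_eq_neg_id hJ2 (h _ (h2 x y))

/-- The Killing 2-form `α = α₂ + α₀` (with `α₂ = J|_v`, `α₀ = 3 J|_z`)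
associated to a bi-invariant orthogonal complex structure `J` on an irreducible 2-step
nilpotent metric Lie algebra is never parallel: `∇_z α = −(1/2)[j(z), α] = −j(z) ∘ J`
cannot vanish for all central `z`. -/
theorem killing_stmt10 {n : Type*} [NormedAddCommGroup n] [InnerProductSpace ℝ n]
    [FiniteDimensional ℝ n]
    (l : n →ₗ[ℝ] n →ₗ[ℝ] n) (hanti : ∀ x : n, l x x = 0)
    (Z : Submodule ℝ n) (hZ : ∀ x : n, x ∈ Z ↔ ∀ y : n, l x y = 0)
    (h2 : ∀ x y : n, l x y ∈ Z) (hna : ∃ x : n, ∃ y : n, l x y ≠ 0)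
    (j : n → n →ₗ[ℝ] n) (hj : ∀ z x y : n, ⟪j z x, y⟫ = ⟪z, l x y⟫)
    (hjinj : ∀ z ∈ Z, j z = 0 → z = 0)
    (hirr : ∀ N' N'' : Submodule ℝ n,
      (∀ x ∈ N', ∀ y : n, l x y ∈ N') → (∀ x ∈ N'', ∀ y : n, l x y ∈ N'') →
      (∀ x ∈ N', ∀ y ∈ N'', ⟪x, y⟫ = 0) → N' ⊔ N'' = ⊤ → N' = ⊥ ∨ N'' = ⊥)
    -- J is a bi-invariant orthogonal complex structure
    (J : n →ₗ[ℝ] n) (hJ2 : J ∘ₗ J = -LinearMap.id)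
    (hJbi : ∀ x y : n, J (l x y) = l (J x) y)
    (hJorth : ∀ a b : n, ⟪J a, J b⟫ = ⟪a, b⟫)
    -- the associated Killing 2-form α = α₂ + α₀ with α₂ = J|_v and α₀ = 3 J|_z
    (A2 A0 : n →ₗ[ℝ] n)
    (hA2Z : ∀ z ∈ Z, A2 z = 0) (hA2V : ∀ x ∈ Zᗮ, A2 x = J x)
    (hA0V : ∀ x ∈ Zᗮ, A0 x = 0) (hA0Z : ∀ z ∈ Z, A0 z = (3 : ℝ) • J z) :
    -- ∇_z α = −(1/2)[j(z), α] equals −j(z) ∘ J, and it cannot vanish for all z ∈ Z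
    (∀ z ∈ Z, (-(1 / 2 : ℝ)) • ((j z) ∘ₗ (A2 + A0) - (A2 + A0) ∘ₗ (j z))
        = -((j z) ∘ₗ J)) ∧
    ¬(∀ z ∈ Z, (j z) ∘ₗ J = 0) :=
  killing_stmt10_general l hanti Z hZ h2 hna j hj hjinj J hJ2 hJbi hJorth A2 A0 hA2Z hA2V hA0V hA0Z
end

section
/- Let n = v ⊕ z be a 2-step nilpotent metric Lie algebra with injective j, and B a symmetric endomorphism of z such that [j(z), j(Bz)] = 0 for all z ∈ z and j(Bz)j(z') − j(Bz')j(z) is skew-symmetric for all z,z' ∈ z. If n is irreducible, then B is a multiple of the identity. -/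
open scoped RealInnerProductSpace

/-!
Fix an eigenvalue `μ` of `B` on the center and let `K` be its eigenspace. For `u ∈ K` and
`z ∈ Z`, condition (1) applied to `z + u` says that `j u` commutes with `j((B - μ)z)`, so
`j((B - μ)z) j(u)` is symmetric; condition (2) for the pair `(u, z)` shows that it is also skew,
hence zero. Consequently `[j(u)x, y]` is orthogonal to `(B - μ)Z`, which forces it into `K`.
Therefore `N = K ⊕ j(K)n` is an ideal whose orthogonal complement is again an ideal and contains
`(B - μ)Z`. Irreducibility and `K ≠ 0` give `Nᗮ = 0`, that is `B = μ` on `Z`.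
-/

section

variable {E : Type*} [NormedAddCommGroup E] [InnerProductSpace ℝ E]

namespace LinearMap

def IsSkew (A : E →ₗ[ℝ] E) : Prop := ∀ x y, ⟪A x, y⟫ = -⟪x, A y⟫

namespace IsSkew

variable {A C : E →ₗ[ℝ] E}

theorem sub (hA : A.IsSkew) (hC : C.IsSkew) : (A - C).IsSkew := fun x y => by
  simp only [sub_apply, inner_sub_left, inner_sub_right, hA x y, hC x y]
  ring

theorem smul (hA : A.IsSkew) (c : ℝ) : (c • A).IsSkew := fun x y => by
  simp only [smul_apply, real_inner_smul_left, real_inner_smul_right, hA x y]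
  ring

theorem mul_sub_mul (hA : A.IsSkew) (hC : C.IsSkew) : (A * C - C * A).IsSkew := fun x y => by
  simp only [sub_apply, Module.End.mul_apply, inner_sub_left, inner_sub_right]
  rw [hA (C x), hC x, hC (A x), hA x]
  ring

theorem isSymmetric_mul_of_commute (hA : A.IsSkew) (hC : C.IsSkew) (h : Commute A C) :
    (A * C).IsSymmetric := fun x y => by
  rw [Module.End.mul_apply, hA, hC, neg_neg, h.eq, Module.End.mul_apply]

theorem eq_zero_of_isSymmetric (hA : A.IsSkew) (hA' : A.IsSymmetric) : A = 0 := by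
  ext x
  have : ⟪A x, A x⟫ = 0 := by linarith [hA x (A x), hA' x (A x)]
  simpa using this

end IsSkew

end LinearMap

section TwoStepNilpotent

open Submodule Module.End

theorem exists_linearMap_eq_of_inner_eq {l : E →ₗ[ℝ] E →ₗ[ℝ] E} {j : E → E →ₗ[ℝ] E}
    (hj : ∀ z x y, ⟪j z x, y⟫ = ⟪z, l x y⟫) : ∃ J : E →ₗ[ℝ] E →ₗ[ℝ] E, ⇑J = j :=
  ⟨{ toFun := j
     map_add' := fun z z' => by
       ext x
       exact ext_inner_right ℝ fun y => by simp only [LinearMap.add_apply, inner_add_left, hj]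
     map_smul' := fun c z => by
       ext x
       exact ext_inner_right ℝ fun y => by
         simp only [LinearMap.smul_apply, real_inner_smul_left, hj, RingHom.id_apply] }, rfl⟩

theorem exists_eigenvector_of_ne_bot [FiniteDimensional ℝ E] {B : E →ₗ[ℝ] E} {Z : Submodule ℝ E}
    (hBZ : ∀ z ∈ Z, B z ∈ Z) (hBsym : ∀ z ∈ Z, ∀ z' ∈ Z, ⟪B z, z'⟫ = ⟪z, B z'⟫) (hZ : Z ≠ ⊥) :
    ∃ μ : ℝ, ∃ u ∈ Z, u ≠ 0 ∧ B u = μ • u := by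
  have : Nontrivial Z := nontrivial_iff_ne_bot.2 hZ
  have hsym : (B.restrict hBZ).IsSymmetric := fun x y => hBsym x x.2 y y.2
  obtain ⟨μ, hμ⟩ : ∃ μ : ℝ, HasEigenvalue (B.restrict hBZ) μ :=
    ⟨_, hsym.hasEigenvalue_iSup_of_finiteDimensional⟩
  obtain ⟨v, hv, hv0⟩ := hμ.exists_hasEigenvector
  refine ⟨μ, v, v.2, by simpa using hv0, ?_⟩
  simpa [Subtype.ext_iff] using mem_eigenspace_iff.1 hv

def IsBracketIdeal (l : E →ₗ[ℝ] E →ₗ[ℝ] E) (N : Submodule ℝ E) : Prop :=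
  ∀ x ∈ N, ∀ y, l x y ∈ N

variable {l J : E →ₗ[ℝ] E →ₗ[ℝ] E} {Z : Submodule ℝ E} {B : E →ₗ[ℝ] E} {μ : ℝ} {u z : E}

theorem isSkew_of_inner_eq (hanti : l.IsAlt) (hJ : ∀ z x y, ⟪J z x, y⟫ = ⟪z, l x y⟫) (z : E) :
    (J z).IsSkew := fun x y => by
  rw [hJ, real_inner_comm (J z y), hJ, ← hanti.neg, inner_neg_right]

theorem map₂_le_orthogonal (hanti : l.IsAlt) (hZ : ∀ c ∈ Z, ∀ x, l c x = 0)
    (hJ : ∀ z x y, ⟪J z x, y⟫ = ⟪z, l x y⟫) (K : Submodule ℝ E) : map₂ J K ⊤ ≤ Zᗮ :=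
  map₂_le.2 fun u _ x _ => (mem_orthogonal' _ _).2 fun c hc => by
    rw [hJ, ← hanti.neg, hZ c hc, neg_zero, inner_zero_right]

theorem isBracketIdeal_sup_map₂ {K : Submodule ℝ E} (hZ : ∀ c ∈ Z, ∀ x, l c x = 0) (hKZ : K ≤ Z)
    (hK : ∀ u ∈ K, ∀ x y, l (J u x) y ∈ K) : IsBracketIdeal l (K ⊔ map₂ J K ⊤) := by
  have hV : map₂ J K ⊤ ≤ ⨅ y, K.comap (l.flip y) :=
    map₂_le.2 fun u hu x _ => mem_iInf _ |>.2 fun y => hK u hu x y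
  intro x hx y
  obtain ⟨a, ha, v, hv, rfl⟩ := mem_sup.1 hx
  rw [map_add, LinearMap.add_apply, hZ a (hKZ ha), zero_add]
  exact mem_sup_left (mem_iInf _ |>.1 (hV hv) y)

theorem isBracketIdeal_orthogonal_sup_map₂ (hanti : l.IsAlt) (hZ : ∀ c ∈ Z, ∀ x, l c x = 0)
    (hJ : ∀ z x y, ⟪J z x, y⟫ = ⟪z, l x y⟫) (h2 : ∀ x y, l x y ∈ Z) (K : Submodule ℝ E) :
    IsBracketIdeal l (K ⊔ map₂ J K ⊤)ᗮ := by
  intro x hx y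
  rw [← inf_orthogonal] at hx ⊢
  refine ⟨(mem_orthogonal _ _).2 fun a ha => ?_, ?_⟩
  · rw [← hJ, isSkew_of_inner_eq hanti hJ,
      inner_left_of_mem_orthogonal (apply_mem_map₂ J ha mem_top) hx.2, neg_zero]
  · exact orthogonal_le (map₂_le_orthogonal hanti hZ hJ K) (le_orthogonal_orthogonal Z (h2 x y))

theorem commute_apply_sub_smul (hBcomm : ∀ z ∈ Z, Commute (J z) (J (B z))) (hu : u ∈ Z)
    (hBu : B u = μ • u) (hz : z ∈ Z) : Commute (J u) (J (B z - μ • z)) := by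
  have h := (hBcomm (z + u) (Z.add_mem hz hu)).eq
  have hz' := (hBcomm z hz).eq
  simp only [map_add, map_smul, hBu, mul_add, add_mul, mul_smul_comm, smul_mul_assoc] at h
  simp only [commute_iff_eq, map_sub, map_smul, mul_sub, sub_mul, mul_smul_comm, smul_mul_assoc]
  linear_combination (norm := module) h - hz'

theorem mul_eq_zero_of_apply_eq_smul (hskew : ∀ z, (J z).IsSkew)
    (hBcomm : ∀ z ∈ Z, Commute (J z) (J (B z)))
    (hBskw : ∀ z ∈ Z, ∀ z' ∈ Z, (J (B z) * J z' - J (B z') * J z).IsSkew) (hu : u ∈ Z)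
    (hBu : B u = μ • u) (hz : z ∈ Z) : J (B z - μ • z) * J u = 0 := by
  refine LinearMap.IsSkew.eq_zero_of_isSymmetric ?_ <|
    (hskew _).isSymmetric_mul_of_commute (hskew u) (commute_apply_sub_smul hBcomm hu hBu hz).symm
  have h : J (B z - μ • z) * J u =
      μ • (J u * J z - J z * J u) - (J (B u) * J z - J (B z) * J u) := by
    simp only [hBu, map_sub, map_smul, sub_mul, smul_mul_assoc, smul_sub]
    abel
  rw [h]
  exact (((hskew u).mul_sub_mul (hskew z)).smul μ).sub (hBskw u hu z hz)

theorem inner_sub_smul_comm (hBsym : ∀ z ∈ Z, ∀ z' ∈ Z, ⟪B z, z'⟫ = ⟪z, B z'⟫) (hu : u ∈ Z)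
    (hz : z ∈ Z) : ⟪B u - μ • u, z⟫ = ⟪u, B z - μ • z⟫ := by
  rw [inner_sub_left, inner_sub_right, hBsym u hu z hz, real_inner_smul_left,
    real_inner_smul_right]

theorem apply_eq_smul_of_inner_eq_zero (hBZ : ∀ z ∈ Z, B z ∈ Z)
    (hBsym : ∀ z ∈ Z, ∀ z' ∈ Z, ⟪B z, z'⟫ = ⟪z, B z'⟫) (hu : u ∈ Z)
    (h : ∀ z ∈ Z, ⟪B z - μ • z, u⟫ = 0) : B u = μ • u := by
  have hmem : B u - μ • u ∈ Z := Z.sub_mem (hBZ u hu) (Z.smul_mem μ hu)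
  rw [← sub_eq_zero, ← inner_self_eq_zero (𝕜 := ℝ), inner_sub_smul_comm hBsym hu hmem,
    real_inner_comm, h _ hmem]

theorem apply_mem_inf_eigenspace (hJ : ∀ z x y, ⟪J z x, y⟫ = ⟪z, l x y⟫)
    (hskew : ∀ z, (J z).IsSkew) (h2 : ∀ x y, l x y ∈ Z) (hBZ : ∀ z ∈ Z, B z ∈ Z)
    (hBsym : ∀ z ∈ Z, ∀ z' ∈ Z, ⟪B z, z'⟫ = ⟪z, B z'⟫)
    (hBcomm : ∀ z ∈ Z, Commute (J z) (J (B z)))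
    (hBskw : ∀ z ∈ Z, ∀ z' ∈ Z, (J (B z) * J z' - J (B z') * J z).IsSkew)
    (hu : u ∈ Z ⊓ eigenspace B μ) (x y : E) : l (J u x) y ∈ Z ⊓ eigenspace B μ := by
  obtain ⟨huZ, hBu⟩ := hu
  refine ⟨h2 _ _, mem_eigenspace_iff.2 <| apply_eq_smul_of_inner_eq_zero hBZ hBsym (h2 _ _)
    fun z hz => ?_⟩
  rw [← hJ, ← Module.End.mul_apply,
    mul_eq_zero_of_apply_eq_smul hskew hBcomm hBskw huZ (mem_eigenspace_iff.1 hBu) hz,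
    LinearMap.zero_apply, inner_zero_left]

theorem sub_smul_mem_orthogonal (hanti : l.IsAlt) (hZ : ∀ c ∈ Z, ∀ x, l c x = 0)
    (hJ : ∀ z x y, ⟪J z x, y⟫ = ⟪z, l x y⟫) (hBZ : ∀ z ∈ Z, B z ∈ Z)
    (hBsym : ∀ z ∈ Z, ∀ z' ∈ Z, ⟪B z, z'⟫ = ⟪z, B z'⟫) (hz : z ∈ Z) :
    B z - μ • z ∈ (Z ⊓ eigenspace B μ ⊔ map₂ J (Z ⊓ eigenspace B μ) ⊤)ᗮ := by
  rw [← inf_orthogonal]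
  refine ⟨(mem_orthogonal _ _).2 fun a ⟨haZ, ha⟩ => ?_, orthogonal_le
    (map₂_le_orthogonal hanti hZ hJ _)
    (le_orthogonal_orthogonal Z (Z.sub_mem (hBZ z hz) (Z.smul_mem μ hz)))⟩
  rw [← inner_sub_smul_comm hBsym haZ hz, mem_eigenspace_iff.1 ha, sub_self, inner_zero_left]

end TwoStepNilpotent

end

theorem killing_stmt15_general {n : Type*} [NormedAddCommGroup n] [InnerProductSpace ℝ n]
    [FiniteDimensional ℝ n]
    (l : n →ₗ[ℝ] n →ₗ[ℝ] n) (hanti : ∀ x : n, l x x = 0)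
    (Z : Submodule ℝ n) (hZ : ∀ x : n, x ∈ Z ↔ ∀ y : n, l x y = 0)
    (h2 : ∀ x y : n, l x y ∈ Z)
    (j : n → n →ₗ[ℝ] n) (hj : ∀ z x y : n, ⟪j z x, y⟫ = ⟪z, l x y⟫)
    -- irreducibility
    (hirr : ∀ N' N'' : Submodule ℝ n,
      (∀ x ∈ N', ∀ y : n, l x y ∈ N') → (∀ x ∈ N'', ∀ y : n, l x y ∈ N'') →
      (∀ x ∈ N', ∀ y ∈ N'', ⟪x, y⟫ = 0) → N' ⊔ N'' = ⊤ → N' = ⊥ ∨ N'' = ⊥)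
    -- B is a symmetric endomorphism of z
    (B : n →ₗ[ℝ] n) (hBZ : ∀ z ∈ Z, B z ∈ Z)
    (hBsym : ∀ z ∈ Z, ∀ z' ∈ Z, ⟪B z, z'⟫ = ⟪z, B z'⟫)
    -- (1): [j(z), j(Bz)] = 0
    (hBcomm : ∀ z ∈ Z, (j z) ∘ₗ (j (B z)) = (j (B z)) ∘ₗ (j z))
    -- (2): j(Bz) j(z') − j(Bz') j(z) is skew-symmetric
    (hBskw : ∀ z ∈ Z, ∀ z' ∈ Z, ∀ a b : n,
      ⟪((j (B z)) ∘ₗ (j z') - (j (B z')) ∘ₗ (j z)) a, b⟫ =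
        -⟪a, ((j (B z)) ∘ₗ (j z') - (j (B z')) ∘ₗ (j z)) b⟫) :
    ∃ c : ℝ, ∀ z ∈ Z, B z = c • z := by
  obtain ⟨J, rfl⟩ := exists_linearMap_eq_of_inner_eq hj
  have hcenter : ∀ c ∈ Z, ∀ x, l c x = 0 := fun c hc => (hZ c).1 hc
  rcases eq_or_ne Z ⊥ with rfl | hZbot
  · exact ⟨0, fun z hz => by rw [(Submodule.mem_bot ℝ).1 hz, map_zero, smul_zero]⟩
  obtain ⟨μ, u, huZ, hu0, hBu⟩ := exists_eigenvector_of_ne_bot hBZ hBsym hZbot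
  set K := Z ⊓ Module.End.eigenspace B μ
  have hK : ∀ v ∈ K, ∀ x y, l (J v x) y ∈ K := fun v hv =>
    apply_mem_inf_eigenspace hj (isSkew_of_inner_eq hanti hj) h2 hBZ hBsym hBcomm hBskw hv
  rcases hirr _ _ (isBracketIdeal_sup_map₂ hcenter inf_le_left hK)
      (isBracketIdeal_orthogonal_sup_map₂ hanti hcenter hj h2 K)
      (fun x hx y hy => Submodule.inner_right_of_mem_orthogonal hx hy)
      Submodule.sup_orthogonal_of_hasOrthogonalProjection with hN | hN
  · have hu : u ∈ K ⊔ Submodule.map₂ J K ⊤ :=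
      Submodule.mem_sup_left ⟨huZ, Module.End.mem_eigenspace_iff.2 hBu⟩
    exact absurd ((Submodule.mem_bot ℝ).1 (hN ▸ hu)) hu0
  · refine ⟨μ, fun z hz => sub_eq_zero.1 ?_⟩
    exact (Submodule.mem_bot ℝ).1 (hN ▸ sub_smul_mem_orthogonal hanti hcenter hj hBZ hBsym hz)

/-- Let `n = v ⊕ z` be a 2-step nilpotent metric Lie algebra with injective
`j`, and `B` a symmetric endomorphism of `z` with `[j(z), j(Bz)] = 0` for all `z ∈ z` and
`j(Bz) j(z') − j(Bz') j(z)` skew-symmetric for all `z, z' ∈ z`.  If `n` is irreducible, then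
`B` is a multiple of the identity. -/
theorem killing_stmt15 {n : Type*} [NormedAddCommGroup n] [InnerProductSpace ℝ n]
    [FiniteDimensional ℝ n]
    (l : n →ₗ[ℝ] n →ₗ[ℝ] n) (hanti : ∀ x : n, l x x = 0)
    (Z : Submodule ℝ n) (hZ : ∀ x : n, x ∈ Z ↔ ∀ y : n, l x y = 0)
    (h2 : ∀ x y : n, l x y ∈ Z) (hna : ∃ x : n, ∃ y : n, l x y ≠ 0)
    (j : n → n →ₗ[ℝ] n) (hj : ∀ z x y : n, ⟪j z x, y⟫ = ⟪z, l x y⟫)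
    (hjinj : ∀ z ∈ Z, j z = 0 → z = 0)
    -- irreducibility
    (hirr : ∀ N' N'' : Submodule ℝ n,
      (∀ x ∈ N', ∀ y : n, l x y ∈ N') → (∀ x ∈ N'', ∀ y : n, l x y ∈ N'') →
      (∀ x ∈ N', ∀ y ∈ N'', ⟪x, y⟫ = 0) → N' ⊔ N'' = ⊤ → N' = ⊥ ∨ N'' = ⊥)
    -- B is a symmetric endomorphism of z
    (B : n →ₗ[ℝ] n) (hBZ : ∀ z ∈ Z, B z ∈ Z)
    (hBsym : ∀ z ∈ Z, ∀ z' ∈ Z, ⟪B z, z'⟫ = ⟪z, B z'⟫)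
    -- (1): [j(z), j(Bz)] = 0
    (hBcomm : ∀ z ∈ Z, (j z) ∘ₗ (j (B z)) = (j (B z)) ∘ₗ (j z))
    -- (2): j(Bz) j(z') − j(Bz') j(z) is skew-symmetric
    (hBskw : ∀ z ∈ Z, ∀ z' ∈ Z, ∀ a b : n,
      ⟪((j (B z)) ∘ₗ (j z') - (j (B z')) ∘ₗ (j z)) a, b⟫ =
        -⟪a, ((j (B z)) ∘ₗ (j z') - (j (B z')) ∘ₗ (j z)) b⟫) :
    ∃ c : ℝ, ∀ z ∈ Z, B z = c • z :=
  killing_stmt15_general l hanti Z hZ h2 j hj hirr B hBZ hBsym hBcomm hBskw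
end
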